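/- arXiv:2412.01143 — 3 statements merged into one kernel-verified Lean document; each statement's English description precedes it below -/
import Mathlib

section
/- Let G be a simple graph on vertex set V, let K ⊆ V be a clique in G with |K| = k (every two distinct vertices of K are adjacent in G), and let W ⊆ V ∖ K be a set such that every vertex of W is adjacent in G to every vertex of K. Set U = K ∪ W. Then for every A ⊆ V with U ∩ A ≠ ∅ and U ∖ A ≠ ∅, the number of edges of G with one endpoint in A and the other in V ∖ A is at least k − 1; moreover, if W ≠ ∅ then this number is at least k. -/
/-- The set of edges of `G` crossing the cut `(A, V \ A)`. -/
def cutEdges {V : Type*} (G : SimpleGraph V) (A : Set V) : Set (Sym2 V) :=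
  {e | e ∈ G.edgeSet ∧ ∃ u v, u ∈ A ∧ v ∉ A ∧ e = s(u, v)}

/-!
Fix `a ∈ U ∩ A` and `b ∈ U \ A`. Every vertex `x` of the clique sees both `a` and `b`, so it
contributes the crossing edge `xb` if `x ∈ A` and `ax` otherwise. These edges are pairwise
distinct as long as `a` and `b` are not both among the vertices used. Taking `K \ {a}` gives
`k - 1` crossing edges; a vertex `w ∈ W` lies outside `K`, so choosing it as `a` or `b` lets all
of `K` be used, giving `k`.
-/

namespace SimpleGraph

variable {V : Type*} {G : SimpleGraph V} {A : Set V}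

lemma mk_mem_cutEdges {u v : V} (huv : G.Adj u v) (hu : u ∈ A) (hv : v ∉ A) :
    s(u, v) ∈ cutEdges G A :=
  ⟨huv, u, v, hu, hv, rfl⟩

open Classical in
noncomputable def crossingEdge (A : Set V) (a b x : V) : Sym2 V :=
  if x ∈ A then s(x, b) else s(a, x)

lemma crossingEdge_mem_cutEdges {a b x : V} (ha : a ∈ A) (hb : b ∉ A)
    (hxa : x ≠ a → G.Adj a x) (hxb : x ≠ b → G.Adj x b) :
    crossingEdge A a b x ∈ cutEdges G A := by
  unfold crossingEdge
  split_ifs with hx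
  · exact mk_mem_cutEdges (hxb (ne_of_mem_of_not_mem hx hb)) hx hb
  · exact mk_mem_cutEdges (hxa (ne_of_mem_of_not_mem ha hx).symm) ha hx

lemma injOn_crossingEdge {S : Set V} {a b : V} (hS : a ∉ S ∨ b ∉ S) :
    S.InjOn (crossingEdge A a b) := by
  have mixed : ∀ x ∈ S, ∀ y ∈ S, x ∈ A → y ∉ A → s(x, b) ≠ s(a, y) := by
    intro x hx y hy hxA hyA hxy
    rcases Sym2.eq_iff.mp hxy with ⟨rfl, rfl⟩ | ⟨rfl, -⟩
    · exact hS.elim (· hx) (· hy)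
    · exact hyA hxA
  intro x hx y hy hxy
  unfold crossingEdge at hxy
  split_ifs at hxy with hxA hyA hyA
  · exact Sym2.congr_left.mp hxy
  · exact (mixed x hx y hy hxA hyA hxy).elim
  · exact (mixed y hy x hx hyA hxA hxy.symm).elim
  · exact Sym2.congr_right.mp hxy

lemma ncard_le_ncard_cutEdges [Finite V] {S : Set V} {a b : V} (ha : a ∈ A) (hb : b ∉ A)
    (hSa : ∀ x ∈ S, x ≠ a → G.Adj a x) (hSb : ∀ x ∈ S, x ≠ b → G.Adj x b)
    (hS : a ∉ S ∨ b ∉ S) :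
    S.ncard ≤ (cutEdges G A).ncard := by
  rw [← (injOn_crossingEdge hS).ncard_image]
  refine Set.ncard_le_ncard ?_ (Set.toFinite _)
  rintro _ ⟨x, hx, rfl⟩
  exact crossingEdge_mem_cutEdges ha hb (hSa x hx) (hSb x hx)

end SimpleGraph

open SimpleGraph in
/-- Let `K` be a clique of size `k` in a simple graph `G`, and let `W` be a
set of vertices outside `K` each adjacent to every vertex of `K`.  Then every cut
`(A, V∖A)` separating `U = K ∪ W` has at least `k − 1` crossing edges, and at least `k`
crossing edges if `W` is nonempty. -/
theorem stmt4 {V : Type*} [Fintype V] (G : SimpleGraph V)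
    (K W : Set V) (k : ℕ) (hKcard : K.ncard = k)
    (hclique : ∀ u ∈ K, ∀ v ∈ K, u ≠ v → G.Adj u v)
    (hWK : W ⊆ Kᶜ)
    (hWadj : ∀ w ∈ W, ∀ v ∈ K, G.Adj w v) :
    ∀ A : Set V, ((K ∪ W) ∩ A).Nonempty → ((K ∪ W) \ A).Nonempty →
      k - 1 ≤ (cutEdges G A).ncard ∧
      (W.Nonempty → k ≤ (cutEdges G A).ncard) := by
  rintro A ⟨a, haU, haA⟩ ⟨b, hbU, hbA⟩
  have hadj : ∀ x ∈ K, ∀ y ∈ K ∪ W, x ≠ y → G.Adj x y := by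
    rintro x hx y (hy | hy) hxy
    exacts [hclique x hx y hy hxy, (hWadj y hy x hx).symm]
  have hcut : ∀ {S : Set V} {a b : V}, S ⊆ K → a ∈ K ∪ W → a ∈ A → b ∈ K ∪ W → b ∉ A →
      a ∉ S ∨ b ∉ S → S.ncard ≤ (cutEdges G A).ncard :=
    fun hSK haU haA hbU hbA ↦ ncard_le_ncard_cutEdges haA hbA
      (fun x hx hxa ↦ (hadj x (hSK hx) _ haU hxa).symm) (fun x hx hxb ↦ hadj x (hSK hx) _ hbU hxb)
  subst hKcard
  refine ⟨?_, fun ⟨w, hw⟩ ↦ ?_⟩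
  · calc K.ncard - 1 ≤ (K \ {a}).ncard := Set.pred_ncard_le_ncard_sdiff_singleton K a
      _ ≤ _ := hcut Set.sdiff_subset haU haA hbU hbA (.inl fun h ↦ h.2 rfl)
  · by_cases hwA : w ∈ A
    · exact hcut subset_rfl (.inr hw) hwA hbU hbA (.inl (hWK hw))
    · exact hcut subset_rfl haU haA (.inr hw) hwA (.inr (hWK hw))
end

section
/- Let G be a simple graph on a vertex set V with |V| = n, and let S satisfy ∅ ⊂ S ⊂ V and |E_G(S, V∖S)| ≤ n. Let C₁ and C₂ be new disjoint vertex sets, disjoint from V, with |C₁| = |C₂| = 2n, and define the simple graph G' on vertex set V ∪ C₁ ∪ C₂ whose edge set consists of: all edges of G; all pairs of distinct vertices within C₁; all pairs of distinct vertices within C₂; all pairs {u, v} with u ∈ C₁ and v ∈ S; and all pairs {u, v} with u ∈ C₂ and v ∈ V∖S. Then the minimum cut value of G' equals |E_G(S, V∖S)|, and it is attained by the cut (C₁ ∪ S, C₂ ∪ (V∖S)). -/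
/-- The augmented graph `G'` on `V ⊕ (C₁ ⊕ C₂)` with `C₁ = C₂ = Fin (2n)`:
all edges of `G`; cliques on `C₁` and on `C₂`; all edges between `C₁` and `S`;
all edges between `C₂` and `V ∖ S`. -/
def extGraph {V : Type*} (n : ℕ) (G : SimpleGraph V) (S : Set V) :
    SimpleGraph (V ⊕ (Fin (2 * n) ⊕ Fin (2 * n))) :=
  SimpleGraph.fromRel (fun x y =>
    match x, y with
    | Sum.inl u, Sum.inl v => G.Adj u v
    | Sum.inr (Sum.inl _), Sum.inr (Sum.inl _) => True
    | Sum.inr (Sum.inr _), Sum.inr (Sum.inr _) => True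
    | Sum.inr (Sum.inl _), Sum.inl v => v ∈ S
    | Sum.inr (Sum.inr _), Sum.inl v => v ∉ S
    | _, _ => False)

/-!
A cut of `G'` that splits one of the two cliques of size `2n` cuts at least `2n - 1 ≥ n` edges.
Otherwise each clique lies on one side. If both lie on the same side, the other side contains a
vertex of `V`, which is joined to all of one clique; if they lie on opposite sides, either the cut
restricts to `S` on `V` and so contains the `G`-edges crossing `S`, or some vertex of `V` lies
opposite to a clique it is fully joined to. Each such vertex already contributes `2n` cut edges.
-/

open Set

theorem cutEdges_compl {W : Type*} (G : SimpleGraph W) (A : Set W) :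
    cutEdges G Aᶜ = cutEdges G A := by
  ext e
  constructor
  · rintro ⟨he, u, v, hu, hv, rfl⟩
    exact ⟨he, v, u, not_notMem.mp hv, hu, Sym2.eq_swap⟩
  · rintro ⟨he, u, v, hu, hv, rfl⟩
    exact ⟨he, v, u, hv, not_notMem.mpr hu, Sym2.eq_swap⟩

theorem ncard_cutEdges_comap_le {W W' : Type*} [Finite W'] {G : SimpleGraph W}
    {G' : SimpleGraph W'} (f : G ↪g G') (B : Set W') :
    (cutEdges G (f ⁻¹' B)).ncard ≤ (cutEdges G' B).ncard := by
  have hmap : Sym2.map f '' cutEdges G (f ⁻¹' B) ⊆ cutEdges G' B := by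
    rintro _ ⟨_, ⟨he, u, v, hu, hv, rfl⟩, rfl⟩
    exact ⟨f.map_adj_iff.mpr he, f u, f v, hu, hv, rfl⟩
  rw [← ncard_image_of_injective _ (Sym2.map.injective f.injective)]
  exact ncard_le_ncard hmap

section CompleteBipartite

variable {W : Type*} [Finite W] {G : SimpleGraph W} {A s t : Set W}

theorem ncard_mul_ncard_le_ncard_cutEdges (hs : s ⊆ A) (ht : t ⊆ Aᶜ)
    (hadj : ∀ u ∈ s, ∀ v ∈ t, G.Adj u v) : s.ncard * t.ncard ≤ (cutEdges G A).ncard := by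
  have hinj : InjOn (fun p : W × W => s(p.1, p.2)) (s ×ˢ t) := by
    rintro ⟨u, v⟩ ⟨hu, -⟩ ⟨u', v'⟩ ⟨-, hv'⟩ heq
    rcases Sym2.eq_iff.mp heq with ⟨rfl, rfl⟩ | ⟨rfl, rfl⟩
    · rfl
    · exact absurd (hs hu) (ht hv')
  have hmaps : MapsTo (fun p : W × W => s(p.1, p.2)) (s ×ˢ t) (cutEdges G A) :=
    fun p ⟨hu, hv⟩ => ⟨hadj _ hu _ hv, p.1, p.2, hs hu, ht hv, rfl⟩
  rw [← ncard_prod]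
  exact ncard_le_ncard_of_injOn _ hmaps hinj

theorem ncard_le_ncard_cutEdges_of_forall_adj {x : W} (hs : s ⊆ A) (hx : x ∉ A)
    (hadj : ∀ u ∈ s, G.Adj u x) : s.ncard ≤ (cutEdges G A).ncard := by
  simpa using ncard_mul_ncard_le_ncard_cutEdges (t := {x}) hs (singleton_subset_iff.mpr hx)
    (by simpa using hadj)

theorem SimpleGraph.IsClique.ncard_le_ncard_cutEdges_add_one (hs : G.IsClique s)
    (hin : ¬s ⊆ Aᶜ) (hout : ¬s ⊆ A) : s.ncard ≤ (cutEdges G A).ncard + 1 := by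
  have ha : (s ∩ A).Nonempty := by
    obtain ⟨x, hx, hxA⟩ := not_subset.mp hin
    exact ⟨x, hx, not_notMem.mp hxA⟩
  have hb : (s \ A).Nonempty := not_subset.mp hout
  have hprod := ncard_mul_ncard_le_ncard_cutEdges (G := G) (s := s ∩ A) (t := s \ A)
    inter_subset_right (fun _ hv => hv.2)
    fun _ hu _ hv => hs hu.1 hv.1 (ne_of_mem_of_not_mem hu.2 hv.2)
  have ha1 := (ncard_pos (toFinite _)).mpr ha
  have hb1 := (ncard_pos (toFinite _)).mpr hb
  rw [← ncard_inter_add_ncard_sdiff_eq_ncard s A]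
  nlinarith

end CompleteBipartite

section ExtGraph

variable {V : Type*} {n : ℕ} {G : SimpleGraph V} {S : Set V}

def leftClique (V : Type*) (n : ℕ) : Set (V ⊕ (Fin (2 * n) ⊕ Fin (2 * n))) :=
  range (Sum.inr ∘ Sum.inl)

def rightClique (V : Type*) (n : ℕ) : Set (V ⊕ (Fin (2 * n) ⊕ Fin (2 * n))) :=
  range (Sum.inr ∘ Sum.inr)

theorem ncard_leftClique : (leftClique V n).ncard = 2 * n := by
  rw [leftClique, ← image_univ, ncard_image_of_injective _
    (Sum.inr_injective.comp Sum.inl_injective), ncard_univ, Nat.card_fin]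

theorem ncard_rightClique : (rightClique V n).ncard = 2 * n := by
  rw [rightClique, ← image_univ, ncard_image_of_injective _
    (Sum.inr_injective.comp Sum.inr_injective), ncard_univ, Nat.card_fin]

theorem extGraph_adj_inl_inl {u v : V} :
    (extGraph n G S).Adj (Sum.inl u) (Sum.inl v) ↔ G.Adj u v := by
  simp only [extGraph, SimpleGraph.fromRel_adj, ne_eq, Sum.inl.injEq]
  exact ⟨fun h => h.2.elim id .symm, fun h => ⟨h.ne, Or.inl h⟩⟩

def extGraph.inlEmbedding : G ↪g extGraph n G S :=
  ⟨Function.Embedding.inl, extGraph_adj_inl_inl⟩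

theorem isClique_leftClique : (extGraph n G S).IsClique (leftClique V n) := by
  rintro _ ⟨c, rfl⟩ _ ⟨c', rfl⟩ h
  exact (SimpleGraph.fromRel_adj _ _ _).mpr ⟨h, Or.inl trivial⟩

theorem isClique_rightClique : (extGraph n G S).IsClique (rightClique V n) := by
  rintro _ ⟨c, rfl⟩ _ ⟨c', rfl⟩ h
  exact (SimpleGraph.fromRel_adj _ _ _).mpr ⟨h, Or.inl trivial⟩

theorem extGraph_adj_of_mem_leftClique {x} (hx : x ∈ leftClique V n) {v : V} (hv : v ∈ S) :
    (extGraph n G S).Adj x (Sum.inl v) := by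
  obtain ⟨c, rfl⟩ := hx
  exact (SimpleGraph.fromRel_adj _ _ _).mpr ⟨by simp, Or.inl hv⟩

theorem extGraph_adj_of_mem_rightClique {x} (hx : x ∈ rightClique V n) {v : V} (hv : v ∉ S) :
    (extGraph n G S).Adj x (Sum.inl v) := by
  obtain ⟨c, rfl⟩ := hx
  exact (SimpleGraph.fromRel_adj _ _ _).mpr ⟨by simp, Or.inl hv⟩

theorem cutEdges_extGraph_canonical_subset :
    cutEdges (extGraph n G S) (Sum.inl '' S ∪ leftClique V n) ⊆
      Sym2.map Sum.inl '' cutEdges G S := by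
  rintro _ ⟨he, x, y, hx, hy, rfl⟩
  rcases x with u | c | c <;> rcases y with v | c' | c'
  · refine ⟨s(u, v), ⟨(extGraph_adj_inl_inl (n := n) (S := S)).mp he, u, v, ?_, ?_, rfl⟩,
      rfl⟩
    · simpa [leftClique] using hx
    · simpa [leftClique] using hy
  all_goals simp_all [leftClique, extGraph, SimpleGraph.fromRel_adj]

variable [Finite V] {A : Set (V ⊕ (Fin (2 * n) ⊕ Fin (2 * n)))}

theorem two_mul_le_ncard_cutEdges_of_leftClique_subset (hL : leftClique V n ⊆ A) {v : V}
    (hv : v ∈ S) (hvA : Sum.inl v ∉ A) : 2 * n ≤ (cutEdges (extGraph n G S) A).ncard :=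
  ncard_leftClique.symm.trans_le <| ncard_le_ncard_cutEdges_of_forall_adj hL hvA
    fun _ hx => extGraph_adj_of_mem_leftClique hx hv

theorem two_mul_le_ncard_cutEdges_of_rightClique_subset (hR : rightClique V n ⊆ A) {v : V}
    (hv : v ∉ S) (hvA : Sum.inl v ∉ A) : 2 * n ≤ (cutEdges (extGraph n G S) A).ncard :=
  ncard_rightClique.symm.trans_le <| ncard_le_ncard_cutEdges_of_forall_adj hR hvA
    fun _ hx => extGraph_adj_of_mem_rightClique hx hv

theorem two_mul_le_ncard_cutEdges_of_cliques_subset (hL : leftClique V n ⊆ A)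
    (hR : rightClique V n ⊆ A) (hA : Aᶜ.Nonempty) :
    2 * n ≤ (cutEdges (extGraph n G S) A).ncard := by
  obtain ⟨x, hx⟩ := hA
  rcases x with v | c | c
  · by_cases hv : v ∈ S
    · exact two_mul_le_ncard_cutEdges_of_leftClique_subset hL hv hx
    · exact two_mul_le_ncard_cutEdges_of_rightClique_subset hR hv hx
  · exact absurd (hL ⟨c, rfl⟩) hx
  · exact absurd (hR ⟨c, rfl⟩) hx

theorem min_le_ncard_cutEdges_of_cliques_separated (hL : leftClique V n ⊆ A)
    (hR : rightClique V n ⊆ Aᶜ) :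
    min (cutEdges G S).ncard (2 * n) ≤ (cutEdges (extGraph n G S) A).ncard := by
  by_cases hA : Sum.inl ⁻¹' A = S
  · exact min_le_of_left_le (hA ▸ ncard_cutEdges_comap_le extGraph.inlEmbedding A)
  obtain ⟨v, hv⟩ : ∃ v, ¬(Sum.inl v ∈ A ↔ v ∈ S) := by
    simpa [Set.ext_iff] using hA
  refine min_le_of_right_le ?_
  by_cases hvS : v ∈ S
  · exact two_mul_le_ncard_cutEdges_of_leftClique_subset hL hvS (by tauto)
  · rw [← cutEdges_compl]
    exact two_mul_le_ncard_cutEdges_of_rightClique_subset hR hvS (not_notMem.mpr (by tauto))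

theorem ncard_cutEdges_le_ncard_cutEdges_extGraph (hcut : (cutEdges G S).ncard ≤ n)
    (hA : A.Nonempty) (hAc : Aᶜ.Nonempty) :
    (cutEdges G S).ncard ≤ (cutEdges (extGraph n G S) A).ncard := by
  have side : ∀ s, (extGraph n G S).IsClique s → s.ncard = 2 * n →
      s ⊆ A ∨ s ⊆ Aᶜ ∨ (cutEdges G S).ncard ≤ (cutEdges (extGraph n G S) A).ncard := by
    intro s hs hcard
    by_cases hin : s ⊆ Aᶜ
    · exact Or.inr (Or.inl hin)
    by_cases hout : s ⊆ A
    · exact Or.inl hout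
    have := hs.ncard_le_ncard_cutEdges_add_one hin hout
    omega
  have hcompl : (cutEdges (extGraph n G S) Aᶜ).ncard = (cutEdges (extGraph n G S) A).ncard := by
    rw [cutEdges_compl]
  obtain hL | hL | h := side _ isClique_leftClique ncard_leftClique
  · obtain hR | hR | h := side _ isClique_rightClique ncard_rightClique
    · have := two_mul_le_ncard_cutEdges_of_cliques_subset (G := G) (S := S) hL hR hAc
      omega
    · have := min_le_ncard_cutEdges_of_cliques_separated (G := G) (S := S) hL hR
      omega
    · exact h
  · obtain hR | hR | h := side _ isClique_rightClique ncard_rightClique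
    · have := min_le_ncard_cutEdges_of_cliques_separated (G := G) (S := S) hL
        (by rwa [compl_compl])
      omega
    · have := two_mul_le_ncard_cutEdges_of_cliques_subset (G := G) (S := S) hL hR
        (by rwa [compl_compl])
      omega
    · exact h
  · exact h

theorem ncard_cutEdges_extGraph_canonical :
    (cutEdges (extGraph n G S) (Sum.inl '' S ∪ leftClique V n)).ncard
      = (cutEdges G S).ncard := by
  refine le_antisymm ?_ ?_
  · exact (ncard_le_ncard cutEdges_extGraph_canonical_subset (toFinite _)).trans_eq
      (ncard_image_of_injective _ (Sym2.map.injective Sum.inl_injective))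
  · have hpre : Sum.inl ⁻¹' (Sum.inl '' S ∪ leftClique V n) = S := by
      ext v
      simp [leftClique]
    calc (cutEdges G S).ncard
        = (cutEdges G (Sum.inl ⁻¹' (Sum.inl '' S ∪ leftClique V n))).ncard := by rw [hpre]
      _ ≤ _ := ncard_cutEdges_comap_le extGraph.inlEmbedding _

end ExtGraph

theorem stmt5_general {V : Type*} [Fintype V] (n : ℕ)
    (G : SimpleGraph V) (S : Set V) (hS : S.Nonempty) (hSc : Sᶜ.Nonempty)
    (hcut : (cutEdges G S).ncard ≤ n) :
    IsLeast {k : ℕ | ∃ A : Set (V ⊕ (Fin (2 * n) ⊕ Fin (2 * n))),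
        A.Nonempty ∧ Aᶜ.Nonempty ∧ k = (cutEdges (extGraph n G S) A).ncard}
      ((cutEdges G S).ncard) ∧
    (cutEdges (extGraph n G S)
        (Sum.inl '' S ∪ Sum.inr '' (Sum.inl '' (Set.univ : Set (Fin (2 * n)))))).ncard
      = (cutEdges G S).ncard := by
  have hcanon : (cutEdges (extGraph n G S)
      (Sum.inl '' S ∪ Sum.inr '' (Sum.inl '' (univ : Set (Fin (2 * n)))))).ncard
        = (cutEdges G S).ncard := by
    rw [image_univ, ← range_comp]
    exact ncard_cutEdges_extGraph_canonical
  obtain ⟨s₀, hs₀⟩ := hS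
  obtain ⟨t₀, ht₀⟩ := hSc
  refine ⟨⟨⟨_, ⟨Sum.inl s₀, Or.inl ⟨s₀, hs₀, rfl⟩⟩, ⟨Sum.inl t₀, ?_⟩, hcanon.symm⟩, ?_⟩,
    hcanon⟩
  · simpa using ht₀
  · rintro _ ⟨A, hA, hAc, rfl⟩
    exact ncard_cutEdges_le_ncard_cutEdges_extGraph hcut hA hAc

/-- If `G` is a simple graph on `n` vertices, `∅ ⊂ S ⊂ V` and
`|E_G(S, V∖S)| ≤ n`, then the minimum cut value of the augmented graph `G'`
equals `|E_G(S, V∖S)|`, and it is attained by the cut `(C₁ ∪ S, C₂ ∪ (V∖S))`. -/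
theorem stmt5 {V : Type*} [Fintype V] (n : ℕ) (hn : Fintype.card V = n)
    (G : SimpleGraph V) (S : Set V) (hS : S.Nonempty) (hSc : Sᶜ.Nonempty)
    (hcut : (cutEdges G S).ncard ≤ n) :
    IsLeast {k : ℕ | ∃ A : Set (V ⊕ (Fin (2 * n) ⊕ Fin (2 * n))),
        A.Nonempty ∧ Aᶜ.Nonempty ∧ k = (cutEdges (extGraph n G S) A).ncard}
      ((cutEdges G S).ncard) ∧
    (cutEdges (extGraph n G S)
        (Sum.inl '' S ∪ Sum.inr '' (Sum.inl '' (Set.univ : Set (Fin (2 * n)))))).ncard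
      = (cutEdges G S).ncard :=
  stmt5_general n G S hS hSc hcut
end

section
/- Let k and t be positive integers, let G₁, …, G_t be simple graphs on pairwise disjoint vertex sets V₁, …, V_t, fix an index i ∈ {1, …, t} and distinct vertices a, b ∈ V_i, and set d = deg_{G_i}(a) + deg_{G_i}(b). Assume d ≥ 1, k ≥ d + 1, and |V_i ∖ {a, b}| ≥ d − 1, and let N ⊆ V_i ∖ {a, b} be any set with |N| = d − 1. Let (I_S, I_T) be any partition of {1, …, t} ∖ {i}, and let S, T and {c} be new pairwise disjoint vertex sets, disjoint from all V_j, with |S| = |T| = k. Define the simple graph H on vertex set V₁ ∪ ⋯ ∪ V_t ∪ S ∪ T ∪ {c} whose edges are: all edges of each G_j; all pairs of distinct vertices within S; all pairs of distinct vertices within T; all pairs between S and {a, b}; all pairs between S and V_j for each j ∈ I_S; all pairs between T and V_i ∖ {a, b}; all pairs between T and V_j for each j ∈ I_T; and all pairs between c and the vertices of N. Then the minimum cut value of H equals d − 2 if {a, b} is an edge of G_i, and equals d − 1 otherwise. -/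
open scoped Classical

/-- The graph `H⁺` of the Index lower-bound reduction, on vertex set
`(Σ j, V j) ⊕ (S ⊕ (T ⊕ {c}))` with `S = T = Fin k`: all edges of each `G j`;
cliques on `S` and `T`; all edges between `S` and `{a, b}`; all edges between `S` and
`V j` for `j ∈ IS`; all edges between `T` and `V i ∖ {a, b}`; all edges between `T` and
`V j` for `j ∉ IS`, `j ≠ i`; and all edges between `c` and the vertices of `N`. -/
def bigGraph {t : ℕ} (V : Fin t → Type*) (G : ∀ j, SimpleGraph (V j)) (k : ℕ)
    (i : Fin t) (a b : V i) (N : Set (V i)) (IS : Set (Fin t)) :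
    SimpleGraph ((Σ j, V j) ⊕ (Fin k ⊕ (Fin k ⊕ Unit))) :=
  SimpleGraph.fromRel (fun x y =>
    (∃ (j : Fin t) (u v : V j), (G j).Adj u v ∧
        x = Sum.inl ⟨j, u⟩ ∧ y = Sum.inl ⟨j, v⟩) ∨
    (∃ s s' : Fin k, x = Sum.inr (Sum.inl s) ∧ y = Sum.inr (Sum.inl s')) ∨
    (∃ s s' : Fin k, x = Sum.inr (Sum.inr (Sum.inl s)) ∧
        y = Sum.inr (Sum.inr (Sum.inl s'))) ∨
    (∃ s : Fin k, x = Sum.inr (Sum.inl s) ∧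
        (y = Sum.inl ⟨i, a⟩ ∨ y = Sum.inl ⟨i, b⟩)) ∨
    (∃ (s : Fin k) (j : Fin t) (u : V j), j ∈ IS ∧
        x = Sum.inr (Sum.inl s) ∧ y = Sum.inl ⟨j, u⟩) ∨
    (∃ (s : Fin k) (u : V i), u ≠ a ∧ u ≠ b ∧
        x = Sum.inr (Sum.inr (Sum.inl s)) ∧ y = Sum.inl ⟨i, u⟩) ∨
    (∃ (s : Fin k) (j : Fin t) (u : V j), j ≠ i ∧ j ∉ IS ∧
        x = Sum.inr (Sum.inr (Sum.inl s)) ∧ y = Sum.inl ⟨j, u⟩) ∨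
    (∃ u : V i, u ∈ N ∧ x = Sum.inr (Sum.inr (Sum.inr ())) ∧ y = Sum.inl ⟨i, u⟩))

/-!
Apart from `c`, the vertices of `H⁺` split into an `S`-side (`S`, `a`, `b` and the `V j` with
`j ∈ IS`) and a `T`-side (`T`, `V i ∖ {a, b}` and the remaining `V j`). Every vertex of a side
is adjacent to the whole `k`-clique of that side, so two vertices of the same side have at
least `k - 2 ≥ d - 1` common neighbours and every cut separating them has at least that many
edges. A cut that keeps both sides whole either cuts off `c`, which costs `|N| = d - 1`, or
separates the two sides, which costs at least the `G i`-edges leaving `{a, b}`: `d - 2` of them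
if `{a, b}` is an edge and `d` otherwise. The `S`-side itself is a cut of exactly that cost.
-/

namespace SimpleGraph

variable {V W : Type*} (G : SimpleGraph V)

theorem mk_mem_cutEdges_iff {A : Set V} {u v : V} :
    s(u, v) ∈ cutEdges G A ↔ G.Adj u v ∧ (u ∈ A ↔ v ∉ A) := by
  simp only [cutEdges, Set.mem_ofPred_eq, mem_edgeSet, Sym2.eq_iff]
  constructor
  · rintro ⟨h, x, y, hx, hy, ⟨rfl, rfl⟩ | ⟨rfl, rfl⟩⟩ <;> tauto
  · rintro ⟨h, hA⟩
    by_cases hu : u ∈ A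
    · exact ⟨h, u, v, hu, hA.1 hu, Or.inl ⟨rfl, rfl⟩⟩
    · exact ⟨h, v, u, not_not.1 (mt hA.2 hu), hu, Or.inr ⟨rfl, rfl⟩⟩

theorem cutEdges_compl (A : Set V) : cutEdges G Aᶜ = cutEdges G A := by
  ext e
  induction e using Sym2.ind
  simp only [mk_mem_cutEdges_iff, Set.mem_compl_iff]
  tauto

theorem cutEdges_singleton (v : V) : cutEdges G {v} = G.incidenceSet v := by
  ext e
  induction e using Sym2.ind with | _ x y => ?_
  rw [mk_mem_cutEdges_iff, mk'_mem_incidenceSet_iff]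
  simp only [Set.mem_singleton_iff]
  constructor
  · rintro ⟨h, hxy⟩
    exact ⟨h, by tauto⟩
  · rintro ⟨h, rfl | rfl⟩
    · exact ⟨h, by simp [h.ne']⟩
    · exact ⟨h, by simp [h.ne]⟩

theorem ncard_incidenceSet (v : V) : (G.incidenceSet v).ncard = (G.neighborSet v).ncard :=
  Nat.card_congr (G.incidenceSetEquivNeighborSet v)

theorem cutEdges_pair {a b : V} (hab : a ≠ b) :
    cutEdges G {a, b} =
      (G.incidenceSet a ∪ G.incidenceSet b) \ (G.incidenceSet a ∩ G.incidenceSet b) := by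
  ext e
  induction e using Sym2.ind with | _ x y => ?_
  simp only [mk_mem_cutEdges_iff, Set.mem_sdiff, Set.mem_union, Set.mem_inter_iff,
    mk'_mem_incidenceSet_iff, Set.mem_insert_iff, Set.mem_singleton_iff]
  by_cases h : G.Adj x y
  · have := h.ne
    grind
  · simp [h]

theorem ncard_cutEdges_pair [Finite V] {a b : V} (hab : a ≠ b) :
    (cutEdges G {a, b}).ncard + (if G.Adj a b then 2 else 0) =
      (G.neighborSet a).ncard + (G.neighborSet b).ncard := by
  have hinter : (G.incidenceSet a ∩ G.incidenceSet b).ncard = if G.Adj a b then 1 else 0 := by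
    split_ifs with h
    · rw [G.incidenceSet_inter_incidenceSet_of_adj h, Set.ncard_singleton]
    · rw [G.incidenceSet_inter_incidenceSet_of_not_adj h hab, Set.ncard_empty]
  have hsub : G.incidenceSet a ∩ G.incidenceSet b ⊆ G.incidenceSet a ∪ G.incidenceSet b :=
    Set.inter_subset_left.trans Set.subset_union_left
  rw [cutEdges_pair G hab, Set.ncard_sdiff hsub, ← ncard_incidenceSet, ← ncard_incidenceSet,
    ← Set.ncard_union_add_ncard_inter, hinter]
  have := Set.ncard_le_ncard hsub
  split_ifs at * <;> omega

theorem ncard_commonNeighbors_le_ncard_cutEdges [Finite V] {A : Set V} {x y : V}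
    (hx : x ∈ A) (hy : y ∉ A) : (G.commonNeighbors x y).ncard ≤ (cutEdges G A).ncard := by
  refine Set.ncard_le_ncard_of_injOn (fun w => if w ∈ A then s(w, y) else s(x, w)) ?_ ?_
  · rintro w ⟨hxw, hwy⟩
    by_cases hw : w ∈ A
    · simp only [hw, if_true, mk_mem_cutEdges_iff]
      exact ⟨hwy.symm, by tauto⟩
    · simp only [hw, if_false, mk_mem_cutEdges_iff]
      exact ⟨hxw, by tauto⟩
  · rintro w ⟨hxw, -⟩ w' ⟨hxw', -⟩ hww'
    have := G.ne_of_adj hxw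
    have := G.ne_of_adj hxw'
    by_cases hw : w ∈ A <;> by_cases hw' : w' ∈ A <;>
      simp only [hw, hw', if_true, if_false, Sym2.eq_iff] at hww' <;> grind

theorem ncard_sub_two_le_ncard_cutEdges [Finite V] {Z B A : Set V}
    (hadj : ∀ x ∈ B, ∀ z ∈ Z, x ≠ z → G.Adj x z) {x y : V} (hxB : x ∈ B)
    (hyB : y ∈ B) (hx : x ∈ A) (hy : y ∉ A) : Z.ncard - 2 ≤ (cutEdges G A).ncard := by
  have hsub : Z \ {x, y} ⊆ G.commonNeighbors x y := by
    rintro z ⟨hz, hzxy⟩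
    simp only [Set.mem_insert_iff, Set.mem_singleton_iff, not_or] at hzxy
    exact ⟨hadj x hxB z hz (Ne.symm hzxy.1), hadj y hyB z hz (Ne.symm hzxy.2)⟩
  calc Z.ncard - 2 ≤ Z.ncard - ({x, y} : Set V).ncard := by
        have := Set.ncard_insert_le x {y}; rw [Set.ncard_singleton] at this; omega
    _ ≤ (Z \ {x, y}).ncard := Set.le_ncard_sdiff _ _
    _ ≤ (G.commonNeighbors x y).ncard := Set.ncard_le_ncard hsub
    _ ≤ _ := G.ncard_commonNeighbors_le_ncard_cutEdges hx hy

theorem forall_adj_fromRel_of_symm {r : V → V → Prop} {P : V → V → Prop}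
    (hP : ∀ x y, P x y → P y x) (hr : ∀ x y, r x y → P x y) :
    ∀ x y, (fromRel r).Adj x y → P x y :=
  fun x y h => h.2.elim (hr x y) (fun h' => hP y x (hr y x h'))

variable {G} {H : SimpleGraph W}

theorem map_mem_cutEdges_iff (f : G →g H) (A : Set W) {e : Sym2 V} (he : e ∈ G.edgeSet) :
    Sym2.map f e ∈ cutEdges H A ↔ e ∈ cutEdges G (f ⁻¹' A) := by
  induction e using Sym2.ind with | _ x y => ?_
  rw [Sym2.map_mk, mk_mem_cutEdges_iff, mk_mem_cutEdges_iff, Set.mem_preimage, Set.mem_preimage]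
  exact ⟨fun h => ⟨he, h.2⟩, fun h => ⟨f.map_adj he, h.2⟩⟩

theorem ncard_cutEdges_preimage_le [Finite W] (f : G →g H) (hf : Function.Injective f)
    (A : Set W) : (cutEdges G (f ⁻¹' A)).ncard ≤ (cutEdges H A).ncard :=
  Set.ncard_le_ncard_of_injOn (Sym2.map f)
    (fun _ he => (map_mem_cutEdges_iff f A he.1).2 he) (Sym2.map.injective hf).injOn

end SimpleGraph

section Reduction

variable {t k : ℕ} {V : Fin t → Type*} {G : ∀ j, SimpleGraph (V j)} {i : Fin t} {a b : V i}
  {N : Set (V i)} {IS : Set (Fin t)}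

local notation "X" => (Σ j, V j) ⊕ (Fin k ⊕ (Fin k ⊕ Unit))

def inclHom : G i →g bigGraph V G k i a b N IS where
  toFun u := .inl ⟨i, u⟩
  map_rel' {u v} h := by
    rw [bigGraph, SimpleGraph.fromRel_adj]
    exact ⟨by simp [h.ne], Or.inl (Or.inl ⟨i, u, v, h, rfl, rfl⟩)⟩

@[simp]
theorem inclHom_apply (u : V i) :
    (inclHom : G i →g bigGraph V G k i a b N IS) u = .inl ⟨i, u⟩ := rfl

theorem inclHom_injective :
    Function.Injective (inclHom : G i →g bigGraph V G k i a b N IS) := by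
  intro u v h
  simpa using h

def sSide (V : Fin t → Type*) (k : ℕ) (i : Fin t) (a b : V i) (IS : Set (Fin t)) :
    Set ((Σ j, V j) ⊕ (Fin k ⊕ (Fin k ⊕ Unit))) :=
  {x | match x with
    | .inl p => p.1 ∈ IS ∨ p = ⟨i, a⟩ ∨ p = ⟨i, b⟩
    | .inr (.inl _) => True
    | .inr (.inr _) => False}

def tSide (V : Fin t → Type*) (k : ℕ) (i : Fin t) (a b : V i) (IS : Set (Fin t)) :
    Set ((Σ j, V j) ⊕ (Fin k ⊕ (Fin k ⊕ Unit))) :=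
  {x | match x with
    | .inl p => ¬(p.1 ∈ IS ∨ p = ⟨i, a⟩ ∨ p = ⟨i, b⟩)
    | .inr (.inr (.inl _)) => True
    | _ => False}

theorem inl_mem_sSide_iff (hIS : i ∉ IS) (u : V i) :
    (.inl ⟨i, u⟩ : X) ∈ sSide V k i a b IS ↔ u ∈ ({a, b} : Set (V i)) := by
  simp [sSide, hIS]

theorem inl_mem_tSide_iff (hIS : i ∉ IS) (u : V i) :
    (.inl ⟨i, u⟩ : X) ∈ tSide V k i a b IS ↔ u ∉ ({a, b} : Set (V i)) := by
  simp [tSide, hIS]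

theorem inl_mem_sSide (a b : V i) : (.inl ⟨i, a⟩ : X) ∈ sSide V k i a b IS := by
  simp [sSide]

theorem mem_sSide_or_mem_tSide_or_eq (x : X) :
    x ∈ sSide V k i a b IS ∨ x ∈ tSide V k i a b IS ∨ x = .inr (.inr (.inr ())) := by
  rcases x with p | s | s | _ <;> simp [sSide, tSide]
  tauto

theorem bigGraph_adj_of_mem_sSide {x : X} (hx : x ∈ sSide V k i a b IS) {s : Fin k}
    (hne : x ≠ .inr (.inl s)) : (bigGraph V G k i a b N IS).Adj x (.inr (.inl s)) := by
  rcases x with ⟨j, u⟩ | s' | _ <;> simp_all [sSide, bigGraph]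
  tauto

theorem bigGraph_adj_of_mem_tSide {x : X} (hx : x ∈ tSide V k i a b IS) {s : Fin k}
    (hne : x ≠ .inr (.inr (.inl s))) :
    (bigGraph V G k i a b N IS).Adj x (.inr (.inr (.inl s))) := by
  rcases x with ⟨j, u⟩ | s' | s' | _ <;> simp_all [tSide, bigGraph]
  by_cases hj : j = i
  · subst hj
    simp_all
  · simp [hj]

theorem bigGraph_neighborSet_c :
    (bigGraph V G k i a b N IS).neighborSet (.inr (.inr (.inr ()))) =
      (inclHom : G i →g bigGraph V G k i a b N IS) '' N := by
  ext x
  simp only [SimpleGraph.mem_neighborSet, Set.mem_image, inclHom_apply]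
  rcases x with p | s' | s' | _ <;> simp [bigGraph, eq_comm]

theorem ncard_cutEdges_c [∀ j, Fintype (V j)] :
    (cutEdges (bigGraph V G k i a b N IS) {.inr (.inr (.inr ()))}).ncard = N.ncard := by
  rw [SimpleGraph.cutEdges_singleton, SimpleGraph.ncard_incidenceSet, bigGraph_neighborSet_c,
    Set.ncard_image_of_injective _ inclHom_injective]

theorem mem_sSide_iff_or_mem_map_edgeSet_of_adj (hIS : i ∉ IS)
    (hN : N ⊆ ({a, b}ᶜ : Set (V i))) :
    ∀ x y : X, (bigGraph V G k i a b N IS).Adj x y →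
      (x ∈ sSide V k i a b IS ↔ y ∈ sSide V k i a b IS) ∨
        s(x, y) ∈ Sym2.map (inclHom : G i →g bigGraph V G k i a b N IS) '' (G i).edgeSet := by
  have hN' : ∀ u ∈ N, u ≠ a ∧ u ≠ b := fun u hu => by simpa using hN hu
  refine SimpleGraph.forall_adj_fromRel_of_symm (fun x y h => ?_) ?_
  · rwa [Iff.comm, Sym2.eq_swap]
  rintro x y (⟨j, u, v, huv, rfl, rfl⟩ | ⟨s, s', rfl, rfl⟩ | ⟨s, s', rfl, rfl⟩ |
        ⟨s, rfl, rfl | rfl⟩ | ⟨s, j, u, hj, rfl, rfl⟩ | ⟨s, u, hua, hub, rfl, rfl⟩ |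
        ⟨s, j, u, hji, hjIS, rfl, rfl⟩ | ⟨u, hu, rfl, rfl⟩)
  · obtain rfl | hj := eq_or_ne j i
    · exact Or.inr ⟨s(u, v), huv, rfl⟩
    · simp [sSide, hj]
  all_goals exact Or.inl (by simp [sSide, *])

theorem cutEdges_sSide_subset (hIS : i ∉ IS) (hN : N ⊆ ({a, b}ᶜ : Set (V i))) :
    cutEdges (bigGraph V G k i a b N IS) (sSide V k i a b IS) ⊆
      Sym2.map (inclHom : G i →g bigGraph V G k i a b N IS) '' cutEdges (G i) {a, b} := by
  intro e he
  induction e using Sym2.ind with | _ x y => ?_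
  obtain ⟨hxy, hcross⟩ := (SimpleGraph.mk_mem_cutEdges_iff _).1 he
  obtain hsame | ⟨e', he', hmap⟩ := mem_sSide_iff_or_mem_map_edgeSet_of_adj hIS hN x y hxy
  · exact absurd hcross (by tauto)
  · have hpre :
        (inclHom : G i →g bigGraph V G k i a b N IS) ⁻¹' sSide V k i a b IS = {a, b} :=
      Set.ext (inl_mem_sSide_iff (k := k) hIS)
    rw [← hmap, SimpleGraph.map_mem_cutEdges_iff _ _ he', hpre] at he
    exact ⟨e', he, hmap⟩

theorem ncard_cutEdges_pair_le [∀ j, Fintype (V j)] (hIS : i ∉ IS) {A : Set X}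
    (hS : ∀ x ∈ sSide V k i a b IS, x ∈ A) (hT : ∀ x ∈ tSide V k i a b IS, x ∉ A) :
    (cutEdges (G i) {a, b}).ncard ≤ (cutEdges (bigGraph V G k i a b N IS) A).ncard := by
  have hpre : (inclHom : G i →g bigGraph V G k i a b N IS) ⁻¹' A = {a, b} := by
    refine Set.Subset.antisymm (fun u hu => ?_) fun u hu => hS _ ((inl_mem_sSide_iff hIS u).2 hu)
    by_contra h
    exact hT _ ((inl_mem_tSide_iff hIS u).2 h) hu
  rw [← hpre]
  exact SimpleGraph.ncard_cutEdges_preimage_le _ inclHom_injective A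

theorem sub_two_le_ncard_cutEdges_of_split [∀ j, Fintype (V j)] {A : Set X}
    (h : (∃ x ∈ sSide V k i a b IS, ∃ y ∈ sSide V k i a b IS, x ∈ A ∧ y ∉ A) ∨
      ∃ x ∈ tSide V k i a b IS, ∃ y ∈ tSide V k i a b IS, x ∈ A ∧ y ∉ A) :
    k - 2 ≤ (cutEdges (bigGraph V G k i a b N IS) A).ncard := by
  have hS : (Set.range fun s : Fin k => (.inr (.inl s) : X)).ncard = k := by
    rw [Set.ncard_range_of_injective (fun _ _ h => by simpa using h), Nat.card_eq_fintype_card,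
      Fintype.card_fin]
  have hT : (Set.range fun s : Fin k => (.inr (.inr (.inl s)) : X)).ncard = k := by
    rw [Set.ncard_range_of_injective (fun _ _ h => by simpa using h), Nat.card_eq_fintype_card,
      Fintype.card_fin]
  rcases h with ⟨x, hx, y, hy, hxA, hyA⟩ | ⟨x, hx, y, hy, hxA, hyA⟩
  · refine Eq.trans_le (by rw [hS])
      (SimpleGraph.ncard_sub_two_le_ncard_cutEdges _ ?_ hx hy hxA hyA)
    rintro x hx _ ⟨s, rfl⟩ hne
    exact bigGraph_adj_of_mem_sSide hx hne
  · refine Eq.trans_le (by rw [hT])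
      (SimpleGraph.ncard_sub_two_le_ncard_cutEdges _ ?_ hx hy hxA hyA)
    rintro x hx _ ⟨s, rfl⟩ hne
    exact bigGraph_adj_of_mem_tSide hx hne

theorem le_ncard_cutEdges_of_notMem [∀ j, Fintype (V j)] (hab : a ≠ b) (hIS : i ∉ IS)
    {d : ℕ} (hd : d = ((G i).neighborSet a).ncard + ((G i).neighborSet b).ncard)
    (hkd : d + 1 ≤ k) (hNcard : N.ncard = d - 1) (A : Set X) (hA : A.Nonempty)
    (hc : .inr (.inr (.inr ())) ∉ A) :
    (if (G i).Adj a b then d - 2 else d - 1) ≤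
      (cutEdges (bigGraph V G k i a b N IS) A).ncard := by
  have hpair := (G i).ncard_cutEdges_pair hab
  by_cases hsplit :
      (∃ x ∈ sSide V k i a b IS, ∃ y ∈ sSide V k i a b IS, x ∈ A ∧ y ∉ A) ∨
      ∃ x ∈ tSide V k i a b IS, ∃ y ∈ tSide V k i a b IS, x ∈ A ∧ y ∉ A
  · have := sub_two_le_ncard_cutEdges_of_split (G := G) (N := N) hsplit
    split_ifs <;> omega
  push Not at hsplit
  obtain ⟨hS, hT⟩ := hsplit
  have haS := inl_mem_sSide (k := k) (IS := IS) a b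
  have htT : (.inr (.inr (.inl ⟨0, by omega⟩)) : X) ∈ tSide V k i a b IS := trivial
  by_cases ha : (.inl ⟨i, a⟩ : X) ∈ A <;>
    by_cases ht : (.inr (.inr (.inl ⟨0, by omega⟩)) : X) ∈ A
  · have hAc : Aᶜ = {.inr (.inr (.inr ()))} := by
      refine Set.eq_singleton_iff_unique_mem.2 ⟨hc, fun x hx => ?_⟩
      rcases mem_sSide_or_mem_tSide_or_eq x with h | h | h
      · exact absurd (hS _ haS _ h ha) hx
      · exact absurd (hT _ htT _ h ht) hx
      · exact h
    rw [← SimpleGraph.cutEdges_compl, hAc, ncard_cutEdges_c]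
    split_ifs <;> omega
  · have := ncard_cutEdges_pair_le (G := G) (N := N) hIS (fun x hx => hS _ haS _ hx ha)
      (fun x hx hxA => ht (hT _ hx _ htT hxA))
    split_ifs at hpair ⊢ <;> omega
  · have := ncard_cutEdges_pair_le (G := G) (N := N) (A := Aᶜ) hIS
      (fun x hx hxA => ha (hS _ hx _ haS hxA)) (fun x hx hxA => hxA (hT _ htT _ hx ht))
    rw [SimpleGraph.cutEdges_compl] at this
    split_ifs at hpair ⊢ <;> omega
  · obtain ⟨x, hx⟩ := hA
    rcases mem_sSide_or_mem_tSide_or_eq x with h | h | rfl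
    · exact absurd (hS _ h _ haS hx) ha
    · exact absurd (hT _ h _ htT hx) ht
    · exact absurd hx hc

end Reduction

theorem stmt6_general (k t : ℕ)
    (V : Fin t → Type*) [∀ j, Fintype (V j)]
    (G : ∀ j, SimpleGraph (V j))
    (i : Fin t) (a b : V i) (hab : a ≠ b)
    (d : ℕ)
    (hd : d = ((G i).neighborSet a).ncard + ((G i).neighborSet b).ncard)
    (hkd : d + 1 ≤ k)
    (N : Set (V i)) (hN : N ⊆ ({a, b}ᶜ : Set (V i))) (hNcard : N.ncard = d - 1)
    (IS : Set (Fin t)) (hIS : i ∉ IS) :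
    IsLeast {m : ℕ | ∃ A : Set ((Σ j, V j) ⊕ (Fin k ⊕ (Fin k ⊕ Unit))),
        A.Nonempty ∧ Aᶜ.Nonempty ∧ m = (cutEdges (bigGraph V G k i a b N IS) A).ncard}
      (if (G i).Adj a b then d - 2 else d - 1) := by
  have hlower := le_ncard_cutEdges_of_notMem (G := G) (N := N) (IS := IS) hab hIS hd hkd hNcard
  refine ⟨?_, fun m ⟨A, hA, hAc, hm⟩ => hm ▸ ?_⟩
  · have haS := inl_mem_sSide (k := k) (IS := IS) a b
    by_cases hadj : (G i).Adj a b
    · refine ⟨sSide V k i a b IS, ⟨_, haS⟩, ⟨.inr (.inr (.inr ())), id⟩,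
        le_antisymm (hlower _ ⟨_, haS⟩ id) ?_⟩
      have hpair := (G i).ncard_cutEdges_pair hab
      rw [if_pos hadj] at hpair ⊢
      calc (cutEdges (bigGraph V G k i a b N IS) (sSide V k i a b IS)).ncard
          ≤ (Sym2.map inclHom '' cutEdges (G i) {a, b}).ncard :=
            Set.ncard_le_ncard (cutEdges_sSide_subset hIS hN)
        _ ≤ (cutEdges (G i) {a, b}).ncard := Set.ncard_image_le
        _ = d - 2 := by omega
    · refine ⟨{.inr (.inr (.inr ()))}, Set.singleton_nonempty _, ⟨.inl ⟨i, a⟩, by simp⟩,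
        ?_⟩
      rw [if_neg hadj, ncard_cutEdges_c, hNcard]
  · by_cases hc : (.inr (.inr (.inr ())) : (Σ j, V j) ⊕ (Fin k ⊕ (Fin k ⊕ Unit))) ∈ A
    · rw [← SimpleGraph.cutEdges_compl]
      exact hlower _ hAc (not_not.2 hc)
    · exact hlower _ hA hc

/-- With `d = deg_{G i}(a) + deg_{G i}(b) ≥ 1`, `k ≥ d + 1`,
`|V i ∖ {a,b}| ≥ d − 1`, `N ⊆ V i ∖ {a,b}` of size `d − 1`, and `(IS, its complement)`
partitioning the indices `≠ i`, the minimum cut value of the graph `H⁺` equals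
`d − 2` if `{a, b}` is an edge of `G i` and `d − 1` otherwise. -/
theorem stmt6 (k t : ℕ) (hk : 0 < k) (ht : 0 < t)
    (V : Fin t → Type*) [∀ j, Fintype (V j)]
    (G : ∀ j, SimpleGraph (V j))
    (i : Fin t) (a b : V i) (hab : a ≠ b)
    (d : ℕ)
    (hd : d = ((G i).neighborSet a).ncard + ((G i).neighborSet b).ncard)
    (hd1 : 1 ≤ d) (hkd : d + 1 ≤ k)
    (hVi : d - 1 ≤ (({a, b}ᶜ : Set (V i))).ncard)
    (N : Set (V i)) (hN : N ⊆ ({a, b}ᶜ : Set (V i))) (hNcard : N.ncard = d - 1)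
    (IS : Set (Fin t)) (hIS : i ∉ IS) :
    IsLeast {m : ℕ | ∃ A : Set ((Σ j, V j) ⊕ (Fin k ⊕ (Fin k ⊕ Unit))),
        A.Nonempty ∧ Aᶜ.Nonempty ∧ m = (cutEdges (bigGraph V G k i a b N IS) A).ncard}
      (if (G i).Adj a b then d - 2 else d - 1) :=
  stmt6_general k t V G i a b hab d hd hkd N hN hNcard IS hIS
end
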